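/- Suppose the power series ρ(z) = z + ∑_{n≥2} n c_n z^n satisfies |c₂| ≤ (1/2) a C̃, |c₃| ≤ (1/2)(b C̃)², and |c_n| ≤ (n^{n-2}/n!)(e^{βB̄} C̃)^{n-1} for n ≥ 4, where 0 < C̃, 1 ≤ a ≤ e^{βB̄}, 1 ≤ b ≤ e^{βB̄}, β ≥ 0, B̄ ≥ 0. Then for each w ∈ (0,1), on the circle |z| = r with e^{βB̄} C̃ r = w e^{-w}, one has min_{|z|=r} |ρ(z)| ≥ (e^{-βB̄}/C̃)·w[2e^{-w} + (1 - a e^{-βB̄}) w e^{-2w} + (3/2)(1 - b² e^{-2βB̄}) w² e^{-3w} - 1]. -/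

import Mathlib

/-!
Since `K r = q := w e^{-w}` with `K = e^{βB̄} C̃`, the hypothesis on `c_n` for `n ≥ 4` bounds the
`n`-th term of the series by `t_n q^n / K`, where `t_n = n^(n-1)/n!` are the coefficients of the
tree function `T(x) = x e^{T(x)}`. The claim then follows from `|ρ(z)| ≥ r - ∑ n |c_n| r^n` and
Euler's bound `T(w e^{-w}) ≤ w`.

That bound is proved on partial sums `A = ∑_{n<N} t_n x^n`. Abel's identity for the polynomials
`x (x+k)^(k-1)/k!` gives the convolution `∑_{i+j=n} i t_i t_j = (n-1) t_n`, hence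
`x A'(x) (1 - A(x)) ≤ A(x)` for `x ≥ 0`: the truncated Cauchy product only loses nonnegative terms.
For `g(v) = A(v e^{-v})` this makes `g e^{v-g} / v` nonincreasing on `(0,1)`, with limit
`g'(0) ≤ 1` at `0`, so `g e^{-g} ≤ v e^{-v}`; as `g` is continuous with `g 0 = 0` it stays below
`1`, where `v ↦ v e^{-v}` is increasing, and therefore `g(v) ≤ v`.
-/

open Real Finset Nat Set Filter Topology

theorem eq_of_hasDerivAt_eq {𝕜 G : Type*} [RCLike 𝕜] [NormedAddCommGroup G] [NormedSpace 𝕜 G]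
    {f g f' : 𝕜 → G} (hf : ∀ x, HasDerivAt f (f' x) x) (hg : ∀ x, HasDerivAt g (f' x) x)
    {a : 𝕜} (ha : f a = g a) (x : 𝕜) : f x = g x := by
  have h := is_const_of_deriv_eq_zero (f := f - g)
    (fun x => ((hf x).sub (hg x)).differentiableAt)
    (fun x => ((hf x).sub (hg x)).deriv.trans (sub_self _)) x a
  rwa [Pi.sub_apply, Pi.sub_apply, ha, sub_self, sub_eq_zero] at h

theorem sum_range_sum_antidiagonal_le_mul {R : Type*} [CommSemiring R] [PartialOrder R]
    [IsOrderedRing R] {f g : ℕ → R} (hf : ∀ n, 0 ≤ f n) (hg : ∀ n, 0 ≤ g n) (N : ℕ) :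
    ∑ n ∈ range N, ∑ p ∈ antidiagonal n, f p.1 * g p.2 ≤
      (∑ n ∈ range N, f n) * ∑ n ∈ range N, g n := by
  simp only [Nat.sum_antidiagonal_eq_sum_range_succ_mk, range_eq_Ico, ← sum_Ico_Ico_comm,
    sum_mul, ← mul_sum]
  refine sum_le_sum fun k _ => mul_le_mul_of_nonneg_left ?_ (hf k)
  rw [sum_Ico_eq_sum_range]
  simp only [add_tsub_cancel_left, ← range_eq_Ico]
  exact sum_le_sum_of_subset_of_nonneg (range_subset_range.mpr (Nat.sub_le N k))
    fun j _ _ => hg j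

theorem two_mul_sum_antidiagonal_fst_mul {R : Type*} [CommSemiring R] (f : ℕ → R) (n : ℕ) :
    2 * ∑ p ∈ antidiagonal n, (p.1 : R) * (f p.1 * f p.2) =
      n * ∑ p ∈ antidiagonal n, f p.1 * f p.2 := by
  rw [two_mul]
  nth_rw 2 [← sum_antidiagonal_swap]
  simp only [Prod.fst_swap, Prod.snd_swap, mul_sum, ← sum_add_distrib]
  refine sum_congr rfl fun p hp => ?_
  rw [← mem_antidiagonal.mp hp]
  push_cast
  ring

noncomputable def abelPoly : ℕ → ℝ → ℝ
  | 0, _ => 1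
  | k + 1, x => x * (x + (k + 1)) ^ k / (k + 1)!

@[simp] theorem abelPoly_zero (x : ℝ) : abelPoly 0 x = 1 := rfl

theorem hasDerivAt_abelPoly_succ (k : ℕ) (x : ℝ) :
    HasDerivAt (abelPoly (k + 1)) (abelPoly k (x + 1)) x := by
  have h : HasDerivAt (abelPoly (k + 1))
      ((1 * (x + (k + 1)) ^ k + x * (k * (x + (k + 1)) ^ (k - 1) * 1)) / (k + 1)!) x :=
    ((hasDerivAt_id' x).mul (((hasDerivAt_id' x).add_const _).pow k)).div_const _
  refine h.congr_deriv ?_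
  cases k with
  | zero => simp [abelPoly]
  | succ j =>
    simp only [abelPoly, Nat.factorial_succ (j + 1), add_tsub_cancel_right]
    push_cast
    field_simp
    ring

theorem sum_antidiagonal_abelPoly_mul_abelPoly (n : ℕ) (x y : ℝ) :
    ∑ p ∈ antidiagonal n, abelPoly p.1 x * abelPoly p.2 y = abelPoly n (x + y) := by
  induction n generalizing x with
  | zero => simp
  | succ n ih =>
    -- both sides have `x`-derivative `abelPoly n (x + 1 + y)` and agree at `x = 0`
    refine eq_of_hasDerivAt_eq
      (f := fun x => ∑ p ∈ antidiagonal (n + 1), abelPoly p.1 x * abelPoly p.2 y)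
      (g := fun x => abelPoly (n + 1) (x + y)) (f' := fun x => abelPoly n (x + 1 + y))
      (fun x => ?_) (fun x => ?_) (a := 0) ?_ x
    · have h := (HasDerivAt.fun_sum (u := antidiagonal n) fun p _ =>
        (hasDerivAt_abelPoly_succ p.1 x).mul_const (abelPoly p.2 y)).const_add
          (abelPoly (n + 1) y)
      rw [ih] at h
      simpa only [sum_antidiagonal_succ, abelPoly_zero, one_mul] using h
    · exact ((hasDerivAt_abelPoly_succ n (x + y)).comp_add_const x y).congr_deriv (by ring_nf)
    · simp [sum_antidiagonal_succ, abelPoly]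

noncomputable def treeCoeff : ℕ → ℝ
  | 0 => 0
  | n + 1 => (n + 1 : ℝ) ^ n / (n + 1)!

@[simp] theorem treeCoeff_zero : treeCoeff 0 = 0 := rfl

theorem treeCoeff_nonneg (n : ℕ) : 0 ≤ treeCoeff n := by
  cases n <;> simp only [treeCoeff, le_refl]
  positivity

theorem treeCoeff_eq_mul_pow_sub_two_div_factorial (n : ℕ) (hn : 2 ≤ n) :
    treeCoeff n = n * ((n : ℝ) ^ (n - 2) / n !) := by
  obtain ⟨m, rfl⟩ := Nat.exists_eq_add_of_le' hn
  simp only [treeCoeff, add_tsub_cancel_right]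
  push_cast
  ring

theorem treeCoeff_succ_eq_abelPoly (n : ℕ) : treeCoeff (n + 1) = abelPoly n 1 := by
  cases n with
  | zero => simp [treeCoeff, abelPoly]
  | succ k =>
    simp only [treeCoeff, abelPoly, Nat.factorial_succ (k + 1)]
    push_cast
    field_simp
    ring

theorem sum_antidiagonal_treeCoeff_mul_treeCoeff (n : ℕ) :
    ∑ p ∈ antidiagonal (n + 2), treeCoeff p.1 * treeCoeff p.2 = abelPoly n 2 := by
  rw [sum_antidiagonal_succ, sum_antidiagonal_succ', ← one_add_one_eq_two,
    ← sum_antidiagonal_abelPoly_mul_abelPoly]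
  simp only [treeCoeff_zero, treeCoeff_succ_eq_abelPoly, zero_mul, mul_zero, zero_add]

theorem sum_antidiagonal_fst_mul_treeCoeff (n : ℕ) :
    ∑ p ∈ antidiagonal n, (p.1 : ℝ) * (treeCoeff p.1 * treeCoeff p.2) =
      ((n : ℝ) - 1) * treeCoeff n := by
  match n with
  | 0 => simp
  | 1 => simp [sum_antidiagonal_succ]
  | m + 2 =>
    have h := two_mul_sum_antidiagonal_fst_mul treeCoeff (m + 2)
    rw [sum_antidiagonal_treeCoeff_mul_treeCoeff] at h
    refine mul_left_cancel₀ two_ne_zero (h.trans ?_)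
    cases m with
    | zero => norm_num [abelPoly, treeCoeff]
    | succ k =>
      simp only [abelPoly, treeCoeff, Nat.factorial_succ (k + 2), Nat.factorial_succ (k + 1)]
      push_cast
      field_simp
      ring

noncomputable def treePartial (N : ℕ) (x : ℝ) : ℝ := ∑ n ∈ range N, treeCoeff n * x ^ n

noncomputable def treePartialDeriv (N : ℕ) (x : ℝ) : ℝ :=
  ∑ n ∈ range N, treeCoeff n * (n * x ^ (n - 1))

theorem hasDerivAt_treePartial (N : ℕ) (x : ℝ) :
    HasDerivAt (treePartial N) (treePartialDeriv N x) x :=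
  HasDerivAt.fun_sum fun n _ => (hasDerivAt_pow n x).const_mul (treeCoeff n)

theorem treePartial_zero_right (N : ℕ) : treePartial N 0 = 0 :=
  sum_eq_zero fun n _ => by cases n <;> simp

theorem treePartialDeriv_zero_right_le_one (N : ℕ) : treePartialDeriv N 0 ≤ 1 := by
  have h (n : ℕ) : treeCoeff n * (n * (0 : ℝ) ^ (n - 1)) = if n = 1 then 1 else 0 := by
    rcases n with _ | _ | n <;> simp [treeCoeff]
  simp only [treePartialDeriv, h, sum_ite_eq', Finset.mem_range]
  split_ifs <;> norm_num

theorem mul_treePartialDeriv_mul_one_sub_le (N : ℕ) {x : ℝ} (hx : 0 ≤ x) :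
    x * treePartialDeriv N x * (1 - treePartial N x) ≤ treePartial N x := by
  set a : ℕ → ℝ := fun n => treeCoeff n * x ^ n
  have ha (n : ℕ) : 0 ≤ a n := mul_nonneg (treeCoeff_nonneg n) (pow_nonneg hx n)
  have hxD : x * treePartialDeriv N x = ∑ n ∈ range N, n * a n := by
    rw [treePartialDeriv, mul_sum]
    refine sum_congr rfl fun n _ => ?_
    cases n with
    | zero => simp
    | succ n => simp only [a, add_tsub_cancel_right, pow_succ]; ring
  have hconv (n : ℕ) : ∑ p ∈ antidiagonal n, p.1 * a p.1 * a p.2 = n * a n - a n := by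
    calc _ = (∑ p ∈ antidiagonal n, (p.1 : ℝ) * (treeCoeff p.1 * treeCoeff p.2)) * x ^ n := by
          rw [sum_mul]
          refine sum_congr rfl fun p hp => ?_
          rw [← mem_antidiagonal.mp hp, pow_add]
          ring
      _ = _ := by rw [sum_antidiagonal_fst_mul_treeCoeff]; ring
  have h := sum_range_sum_antidiagonal_le_mul (f := fun n => n * a n) (g := a)
    (fun n => mul_nonneg n.cast_nonneg (ha n)) ha N
  simp only [hconv, sum_sub_distrib] at h
  rw [hxD, treePartial]
  linarith

theorem hasDerivAt_mul_exp_neg (v : ℝ) :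
    HasDerivAt (fun v => v * exp (-v)) ((1 - v) * exp (-v)) v := by
  have h : HasDerivAt (fun v => v * exp (-v)) (1 * exp (-v) + v * (exp (-v) * -1)) v :=
    (hasDerivAt_id' v).mul (hasDerivAt_neg v).exp
  exact h.congr_deriv (by ring)

theorem strictMonoOn_mul_exp_neg : StrictMonoOn (fun v : ℝ => v * exp (-v)) (Iic 1) :=
  strictMonoOn_of_hasDerivWithinAt_pos (convex_Iic 1) (by fun_prop)
    (fun v _ => (hasDerivAt_mul_exp_neg v).hasDerivWithinAt)
    (fun v hv => by rw [interior_Iic] at hv; exact mul_pos (by linarith [hv.out]) (exp_pos _))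

theorem le_of_mul_exp_neg_le {g : ℝ → ℝ} (hg : Continuous g) (hg0 : g 0 = 0)
    (h : ∀ v ∈ Ioo (0 : ℝ) 1, g v * exp (-g v) ≤ v * exp (-v)) {v : ℝ}
    (hv : v ∈ Ioo (0 : ℝ) 1) : g v ≤ v := by
  have hlt : g v < 1 := by
    by_contra! hge
    obtain ⟨u, hu, hgu⟩ := intermediate_value_Icc hv.1.le hg.continuousOn
      (show (1 : ℝ) ∈ Icc (g 0) (g v) from ⟨hg0.symm ▸ zero_le_one, hge⟩)
    have hu0 : u ≠ 0 := by rintro rfl; simp [hg0] at hgu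
    have hu1 : u < 1 := hu.2.trans_lt hv.2
    have := h u ⟨lt_of_le_of_ne hu.1 (Ne.symm hu0), hu1⟩
    rw [hgu] at this
    exact this.not_gt (strictMonoOn_mul_exp_neg hu1.le (le_refl (1 : ℝ)) hu1)
  exact (strictMonoOn_mul_exp_neg.le_iff_le hlt.le hv.2.le).mp (h v hv)

theorem mul_exp_neg_le_of_deriv_le {g g' : ℝ → ℝ} (hg : ∀ v, HasDerivAt g (g' v) v)
    (hg0 : g 0 = 0) (hg'0 : g' 0 ≤ 1)
    (hsub : ∀ v ∈ Ioo (0 : ℝ) 1, v * g' v * (1 - g v) ≤ (1 - v) * g v)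
    {v : ℝ} (hv : v ∈ Ioo (0 : ℝ) 1) : g v * exp (-g v) ≤ v * exp (-v) := by
  set M : ℝ → ℝ := fun u => g u * exp (u - g u) / u
  have hM : ∀ u ∈ Ioo (0 : ℝ) 1, HasDerivAt M
      (exp (u - g u) * (u * g' u * (1 - g u) - (1 - u) * g u) / u ^ 2) u := fun u hu =>
    (((hg u).mul ((hasDerivAt_id' u).sub (hg u)).exp).div (hasDerivAt_id' u) hu.1.ne').congr_deriv
      (by simp only [Pi.mul_apply, Pi.sub_apply]; ring)
  have hanti : AntitoneOn M (Ioo 0 1) :=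
    antitoneOn_of_hasDerivWithinAt_nonpos (convex_Ioo 0 1)
      (fun u hu => (hM u hu).continuousAt.continuousWithinAt)
      (fun u hu => (hM u (interior_subset hu)).hasDerivWithinAt)
      (fun u hu => div_nonpos_of_nonpos_of_nonneg (mul_nonpos_of_nonneg_of_nonpos (exp_pos _).le
        (sub_nonpos.2 (hsub u (interior_subset hu)))) (sq_nonneg u))
  have hlim : Tendsto M (𝓝[>] 0) (𝓝 (g' 0)) := by
    have hexp : Tendsto (fun u => exp (u - g u)) (𝓝[>] 0) (𝓝 1) := by
      have hc : Continuous fun u => exp (u - g u) :=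
        (continuous_id.sub (continuous_iff_continuousAt.2 fun u => (hg u).continuousAt)).rexp
      simpa [hg0] using (hc.tendsto 0).mono_left (nhdsWithin_le_nhds (s := Ioi 0))
    refine ((hg 0).tendsto_slope_zero_right.mul hexp).congr' ?_ |>.trans (by rw [mul_one])
    filter_upwards [self_mem_nhdsWithin] with u hu
    simp [M, hg0, div_eq_inv_mul, mul_assoc]
  have hMv : M v ≤ 1 := by
    refine le_trans (ge_of_tendsto hlim ?_) hg'0
    filter_upwards [Ioo_mem_nhdsGT hv.1] with u hu
    exact hanti ⟨hu.1, hu.2.trans hv.2⟩ hv hu.2.le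
  have : g v * exp (v - g v) ≤ v := (div_le_one hv.1).mp hMv
  calc g v * exp (-g v) = g v * exp (v - g v) * exp (-v) := by
        rw [mul_assoc, ← exp_add]; ring_nf
    _ ≤ v * exp (-v) := mul_le_mul_of_nonneg_right this (exp_pos _).le

theorem treePartial_mul_exp_neg_le (N : ℕ) {w : ℝ} (hw : w ∈ Ioo (0 : ℝ) 1) :
    treePartial N (w * exp (-w)) ≤ w := by
  have hg (v : ℝ) : HasDerivAt (fun v => treePartial N (v * exp (-v)))
      (treePartialDeriv N (v * exp (-v)) * ((1 - v) * exp (-v))) v :=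
    (hasDerivAt_treePartial N _).comp v (hasDerivAt_mul_exp_neg v)
  have hg0 : treePartial N (0 * exp (-0)) = 0 := by simp [treePartial_zero_right]
  refine le_of_mul_exp_neg_le (g := fun v => treePartial N (v * exp (-v)))
    (continuous_iff_continuousAt.2 fun v => (hg v).continuousAt) hg0
    (fun v hv => mul_exp_neg_le_of_deriv_le hg hg0 ?_ (fun u hu => ?_) hv) hw
  · simpa using treePartialDeriv_zero_right_le_one N
  · have h := mul_treePartialDeriv_mul_one_sub_le N (mul_nonneg hu.1.le (exp_pos (-u)).le)
    calc _ = (1 - u) * (u * exp (-u) * treePartialDeriv N (u * exp (-u)) *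
          (1 - treePartial N (u * exp (-u)))) := by ring
      _ ≤ _ := mul_le_mul_of_nonneg_left h (by linarith [hu.2])

theorem summable_treeCoeff_mul_pow {w : ℝ} (hw : w ∈ Ioo (0 : ℝ) 1) :
    Summable fun n => treeCoeff n * (w * exp (-w)) ^ n :=
  summable_of_sum_range_le
    (fun n => mul_nonneg (treeCoeff_nonneg n) (pow_nonneg (by positivity [hw.1.le]) n))
    (fun N => treePartial_mul_exp_neg_le N hw)

theorem tsum_treeCoeff_mul_pow_le {w : ℝ} (hw : w ∈ Ioo (0 : ℝ) 1) :
    ∑' n, treeCoeff n * (w * exp (-w)) ^ n ≤ w :=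
  (summable_treeCoeff_mul_pow hw).tsum_le_of_sum_range_le fun N => treePartial_mul_exp_neg_le N hw

theorem tsum_treeCoeff_mul_pow_add_four_le {w : ℝ} (hw : w ∈ Ioo (0 : ℝ) 1) :
    ∑' n, treeCoeff (n + 4) * (w * exp (-w)) ^ (n + 4) ≤
      w - w * exp (-w) - (w * exp (-w)) ^ 2 - 3 / 2 * (w * exp (-w)) ^ 3 := by
  have h := tsum_treeCoeff_mul_pow_le hw
  have h4 : ∑ n ∈ range 4, treeCoeff n * (w * exp (-w)) ^ n =
      w * exp (-w) + (w * exp (-w)) ^ 2 + 3 / 2 * (w * exp (-w)) ^ 3 := by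
    norm_num [sum_range_succ, treeCoeff, Nat.factorial]
  rw [← (summable_treeCoeff_mul_pow hw).sum_add_tsum_nat_add 4, h4] at h
  linarith

theorem norm_tsum_coeff_mul_pow_le {c : ℕ → ℂ} {K w r : ℝ} (hK : 0 < K)
    (hw : w ∈ Ioo (0 : ℝ) 1) (hr : K * r = w * exp (-w))
    (hc : ∀ n ≥ 4, ‖c n‖ ≤ ((n : ℝ) ^ (n - 2) / n !) * K ^ (n - 1)) {z : ℂ} (hz : ‖z‖ = r) :
    ‖∑' n : ℕ, ((n : ℂ) + 2) * c (n + 2) * z ^ (n + 2)‖ ≤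
      2 * ‖c 2‖ * r ^ 2 + 3 * ‖c 3‖ * r ^ 3 +
        (w - w * exp (-w) - (w * exp (-w)) ^ 2 - 3 / 2 * (w * exp (-w)) ^ 3) / K := by
  have hr0 : 0 ≤ r := hz ▸ norm_nonneg z
  set q := w * exp (-w)
  set f : ℕ → ℂ := fun n => ((n : ℂ) + 2) * c (n + 2) * z ^ (n + 2)
  have hnorm (n : ℕ) : ‖f n‖ = ((n + 2 : ℕ) : ℝ) * ‖c (n + 2)‖ * r ^ (n + 2) := by
    simp only [f, norm_mul, norm_pow, hz]
    norm_cast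
  have htail (m : ℕ) : ‖f (m + 2)‖ ≤ treeCoeff (m + 4) * q ^ (m + 4) / K := by
    have hcm := hc (m + 4) (by omega)
    rw [show m + 4 - 2 = m + 2 by omega, show m + 4 - 1 = m + 3 by omega] at hcm
    rw [hnorm, treeCoeff_eq_mul_pow_sub_two_div_factorial (m + 4) (by omega), ← hr,
      show m + 4 - 2 = m + 2 by omega]
    calc ((m + 2 + 2 : ℕ) : ℝ) * ‖c (m + 2 + 2)‖ * r ^ (m + 2 + 2)
        ≤ ((m + 4 : ℕ) : ℝ) * (((m + 4 : ℕ) : ℝ) ^ (m + 2) / (m + 4)! * K ^ (m + 3)) *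
            r ^ (m + 4) := by gcongr
      _ = _ := by field_simp; ring
  have hsum : HasSum (fun m => treeCoeff (m + 4) * q ^ (m + 4) / K)
      ((∑' m, treeCoeff (m + 4) * q ^ (m + 4)) / K) :=
    ((summable_nat_add_iff 4).mpr (summable_treeCoeff_mul_pow hw)).hasSum.div_const K
  have hf : Summable f :=
    (summable_nat_add_iff 2).mp (Summable.of_norm_bounded hsum.summable htail)
  have h0 : ‖f 0‖ = 2 * ‖c 2‖ * r ^ 2 := by rw [hnorm]; norm_num
  have h1 : ‖f 1‖ = 3 * ‖c 3‖ * r ^ 3 := by rw [hnorm]; norm_num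
  rw [← hf.sum_add_tsum_nat_add 2]
  calc ‖∑ i ∈ range 2, f i + ∑' m, f (m + 2)‖ ≤ ‖f 0‖ + ‖f 1‖ + ‖∑' m, f (m + 2)‖ := by
        simpa [sum_range_succ] using norm_add₃_le
    _ ≤ _ := by
        rw [h0, h1]
        gcongr
        exact (tsum_of_norm_bounded hsum htail).trans
          (div_le_div_of_nonneg_right (tsum_treeCoeff_mul_pow_add_four_le hw) hK.le)

theorem density_series_lower_bound_improved_general
    (ρ : ℂ → ℂ) (c : ℕ → ℂ) (Ctil a b β Bbar : ℝ)
    (hC : 0 < Ctil)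
    (hρ : ∀ z : ℂ, ρ z = z + ∑' n : ℕ, ((n : ℂ) + 2) * c (n + 2) * z ^ (n + 2))
    (hc2 : ‖c 2‖ ≤ (1 / 2) * a * Ctil)
    (hc3 : ‖c 3‖ ≤ (1 / 2) * (b * Ctil) ^ 2)
    (hcn : ∀ n ≥ 4, ‖c n‖ ≤ ((n : ℝ) ^ (n - 2) / Nat.factorial n) *
      (Real.exp (β * Bbar) * Ctil) ^ (n - 1)) :
    ∀ w ∈ Set.Ioo (0 : ℝ) 1, ∀ r : ℝ,
      Real.exp (β * Bbar) * Ctil * r = w * Real.exp (-w) →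
      ∀ z : ℂ, ‖z‖ = r →
        (Real.exp (-(β * Bbar)) / Ctil) *
          (w * (2 * Real.exp (-w)
            + (1 - a * Real.exp (-(β * Bbar))) * w * Real.exp (-2 * w)
            + (3 / 2) * (1 - b ^ 2 * Real.exp (-2 * (β * Bbar))) * w ^ 2 * Real.exp (-3 * w)
            - 1)) ≤ ‖ρ z‖ := by
  intro w hw r hr z hz
  have hr0 : 0 ≤ r := hz ▸ norm_nonneg z
  have hS := norm_tsum_coeff_mul_pow_le (mul_pos (exp_pos _) hC) hw hr hcn hz
  have h2 : 2 * ‖c 2‖ * r ^ 2 ≤ a * Ctil * r ^ 2 :=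
    mul_le_mul_of_nonneg_right (by linarith) (by positivity)
  have h3 : 3 * ‖c 3‖ * r ^ 3 ≤ 3 / 2 * (b * Ctil) ^ 2 * r ^ 3 :=
    mul_le_mul_of_nonneg_right (by linarith) (by positivity)
  have hρz : ‖z‖ - ‖∑' n : ℕ, ((n : ℂ) + 2) * c (n + 2) * z ^ (n + 2)‖ ≤ ‖ρ z‖ := by
    rw [hρ z]; exact norm_sub_le_norm_add _ _
  have hr' : r = w * exp (-w) / (exp (β * Bbar) * Ctil) := by
    rw [← hr]; field_simp
  have hexp (x : ℝ) : exp (-2 * x) = exp (-x) ^ 2 ∧ exp (-3 * x) = exp (-x) ^ 3 :=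
    ⟨by rw [← exp_nat_mul]; ring_nf, by rw [← exp_nat_mul]; ring_nf⟩
  have key : exp (-(β * Bbar)) / Ctil * (w * (2 * exp (-w)
      + (1 - a * exp (-(β * Bbar))) * w * exp (-2 * w)
      + 3 / 2 * (1 - b ^ 2 * exp (-2 * (β * Bbar))) * w ^ 2 * exp (-3 * w) - 1)) =
      r - (a * Ctil * r ^ 2 + 3 / 2 * (b * Ctil) ^ 2 * r ^ 3 +
        (w - w * exp (-w) - (w * exp (-w)) ^ 2 - 3 / 2 * (w * exp (-w)) ^ 3) /
          (exp (β * Bbar) * Ctil)) := by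
    rw [(hexp w).1, (hexp w).2, (hexp _).1, exp_neg (β * Bbar), hr']
    field_simp
    ring
  rw [key]
  linarith

theorem density_series_lower_bound_improved
    (ρ : ℂ → ℂ) (c : ℕ → ℂ) (Ctil a b β Bbar : ℝ)
    (hC : 0 < Ctil) (ha : 1 ≤ a) (ha' : a ≤ Real.exp (β * Bbar))
    (hb : 1 ≤ b) (hb' : b ≤ Real.exp (β * Bbar)) (hβ : 0 ≤ β) (hB : 0 ≤ Bbar)
    (hρ : ∀ z : ℂ, ρ z = z + ∑' n : ℕ, ((n : ℂ) + 2) * c (n + 2) * z ^ (n + 2))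
    (hc2 : ‖c 2‖ ≤ (1 / 2) * a * Ctil)
    (hc3 : ‖c 3‖ ≤ (1 / 2) * (b * Ctil) ^ 2)
    (hcn : ∀ n ≥ 4, ‖c n‖ ≤ ((n : ℝ) ^ (n - 2) / Nat.factorial n) *
      (Real.exp (β * Bbar) * Ctil) ^ (n - 1)) :
    ∀ w ∈ Set.Ioo (0 : ℝ) 1, ∀ r : ℝ,
      Real.exp (β * Bbar) * Ctil * r = w * Real.exp (-w) →
      ∀ z : ℂ, ‖z‖ = r →
        (Real.exp (-(β * Bbar)) / Ctil) *
          (w * (2 * Real.exp (-w)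
            + (1 - a * Real.exp (-(β * Bbar))) * w * Real.exp (-2 * w)
            + (3 / 2) * (1 - b ^ 2 * Real.exp (-2 * (β * Bbar))) * w ^ 2 * Real.exp (-3 * w)
            - 1)) ≤ ‖ρ z‖ :=
  density_series_lower_bound_improved_general ρ c Ctil a b β Bbar hC hρ hc2 hc3 hcn
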